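/- KKT characterization: x* with x_i* = (√(c_i/(M λ)) − c_i/M)⁺ / σ_{v,i}² (for appropriate λ > 0 with Σ x_i* = P) maximizes Σ_{i=1}^N M x_i/(c_i + M σ_{v,i}² x_i) over {x : x_i ≥ 0, Σ x_i = P}. -/

import Mathlib

lemma waterfill_key (M lam c σ x : ℝ) (hM : 0 < M) (hlam : 0 < lam)
    (hc : 0 < c) (hσ : 0 < σ) (hx : 0 ≤ x) :
    M * x / (c + M * σ * x) - lam * x ≤
      M * (max (Real.sqrt (c / (M * lam)) - c / M) 0 / σ) /
        (c + M * σ * (max (Real.sqrt (c / (M * lam)) - c / M) 0 / σ)) -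
      lam * (max (Real.sqrt (c / (M * lam)) - c / M) 0 / σ) := by
  set s := Real.sqrt (c / (M * lam)) with hs
  have hs0 : 0 ≤ s := Real.sqrt_nonneg _
  have hs2 : s ^ 2 = c / (M * lam) := Real.sq_sqrt (by positivity)
  have ht : 0 < c + M * σ * x := by positivity
  rcases le_or_gt s (c / M) with hle | hlt
  · -- xstar = 0 here
    have hmax : max (s - c / M) 0 = 0 := max_eq_right (by linarith)
    rw [hmax]
    have hMc : M ≤ lam * c := by
      have h1 : lam * (M * s ^ 2) = c := by
        rw [hs2]; field_simp
      have h2 : s * M ≤ c := (le_div_iff₀ hM).mp hle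
      nlinarith [mul_le_mul h2 h2 (by positivity : (0:ℝ) ≤ s * M) hc.le,
        mul_pos hlam hc]
    have : M * x / (c + M * σ * x) ≤ lam * x := by
      rw [div_le_iff₀ ht]
      nlinarith [mul_nonneg (mul_nonneg (mul_nonneg hlam.le hx) (mul_nonneg hM.le hσ.le)) hx]
    simp only [zero_div, mul_zero, zero_div, sub_zero]
    linarith
  · -- xstar > 0 here
    have hsc : 0 < s := lt_trans (by positivity) hlt
    have hmax : max (s - c / M) 0 = s - c / M := max_eq_left (by linarith)
    rw [hmax]
    have hlam' : lam = c / (M * s ^ 2) := by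
      rw [hs2]; field_simp
    have hid : (M * ((s - c / M) / σ) / (c + M * σ * ((s - c / M) / σ)) -
          lam * ((s - c / M) / σ)) - (M * x / (c + M * σ * x) - lam * x) =
        c * ((M * s) - (c + M * σ * x)) ^ 2 / (σ * (c + M * σ * x) * (M * s) ^ 2) := by
      rw [hlam']
      have hden : c + M * σ * ((s - c / M) / σ) = M * s := by
        field_simp; ring
      rw [hden]
      field_simp
      ring
    nlinarith [div_nonneg (mul_nonneg hc.le (sq_nonneg ((M * s) - (c + M * σ * x))))
      (by positivity : (0:ℝ) ≤ σ * (c + M * σ * x) * (M * s) ^ 2)]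

theorem stmt_17 (N : ℕ) (M P lam : ℝ) (hM : 0 < M) (hP : 0 < P) (hlam : 0 < lam)
    (c σv2 : Fin N → ℝ) (hc : ∀ i, 0 < c i) (hσv : ∀ i, 0 < σv2 i)
    (xstar : Fin N → ℝ)
    (hxstar : ∀ i, xstar i = max (Real.sqrt (c i / (M * lam)) - c i / M) 0 / σv2 i)
    (hsum : ∑ i, xstar i = P) :
    IsMaxOn (fun x : Fin N → ℝ => ∑ i, M * x i / (c i + M * σv2 i * x i))
      {x : Fin N → ℝ | (∀ i, 0 ≤ x i) ∧ ∑ i, x i = P} xstar := by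
  rw [isMaxOn_iff]
  intro x hx
  obtain ⟨hx0, hxP⟩ := hx
  have key : ∀ i ∈ Finset.univ, M * x i / (c i + M * σv2 i * x i) - lam * x i ≤
      M * xstar i / (c i + M * σv2 i * xstar i) - lam * xstar i := by
    intro i _
    rw [hxstar i]
    exact waterfill_key M lam (c i) (σv2 i) (x i) hM hlam (hc i) (hσv i) (hx0 i)
  have h1 := Finset.sum_le_sum key
  simp only [Finset.sum_sub_distrib, ← Finset.mul_sum] at h1
  rw [hxP, hsum] at h1
  simpa using h1
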